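/- Let W be a Markov generator and, for q ∈ ℝ, let M(q) be the tilted matrix obtained from W by replacing the off-diagonal entries W_{12}, W_{21} with W_{12} e^{−q}, W_{21} e^{q} respectively (diagonal unchanged). Let F̃ = log(W_{12} p^st_2/(W_{21} p^st_1)) and W̃ the HTR generator. Then W̃ = P_st M(F̃)ᵀ P_st⁻¹. -/

import Mathlib

/-!
Off the edge `1 ↔ 2` the stalling generator agrees with `W`, so there `W̃` and `P_st M(q)ᵀ P_st⁻¹`
are both the `p^st`-time reversal of `W`, and on the diagonal both reduce to `W`. On the edge,
`W^st` vanishes and `W̃` keeps the original rates `W₁₂, W₂₁`; the tilt `q = F̃` is exactly the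
one for which the time-reversed tilted rates `p₁ W₂₁ e^{q} / p₂` and `p₂ W₁₂ e^{-q} / p₁`
return these original rates. (States `1, 2` are the indices `0, 1`.)
-/

open Matrix Real

namespace Matrix

variable {ι : Type*} [Fintype ι] [DecidableEq ι]

noncomputable def timeReversal (p : ι → ℝ) (A : Matrix ι ι ℝ) : Matrix ι ι ℝ :=
  diagonal p * Aᵀ * diagonal fun i => (p i)⁻¹

@[simp]
theorem timeReversal_apply (p : ι → ℝ) (A : Matrix ι ι ℝ) (i j : ι) :
    timeReversal p A i j = p i * A j i * (p j)⁻¹ := by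
  simp [timeReversal, diagonal_mul, mul_diagonal]

noncomputable def htrGenerator (p : ι → ℝ) (W Wst : Matrix ι ι ℝ) : Matrix ι ι ℝ :=
  W - Wst + timeReversal p Wst

theorem htrGenerator_eq_timeReversal {p : ι → ℝ} {W Wst N : Matrix ι ι ℝ} {a b : ι}
    (hp : ∀ i, p i ≠ 0)
    (hWst_ab : Wst a b = 0) (hWst_ba : Wst b a = 0)
    (hWst : ∀ i j, i ≠ j → s(i, j) ≠ s(a, b) → Wst i j = W i j)
    (hN : ∀ i j, s(i, j) ≠ s(a, b) → N i j = W i j)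
    (hN_ba : p a * N b a = W a b * p b) (hN_ab : p b * N a b = W b a * p a) :
    htrGenerator p W Wst = timeReversal p N := by
  ext i j
  simp only [htrGenerator, add_apply, sub_apply, timeReversal_apply]
  by_cases hij : s(i, j) = s(a, b)
  · rcases Sym2.eq_iff.mp hij with ⟨rfl, rfl⟩ | ⟨rfl, rfl⟩
    · rw [hWst_ab, hWst_ba, hN_ba]
      field_simp [hp]
      ring
    · rw [hWst_ab, hWst_ba, hN_ab]
      field_simp [hp]
      ring
  · have hji : s(j, i) ≠ s(a, b) := by rwa [Sym2.eq_swap]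
    rw [hN j i hji]
    obtain rfl | hne := eq_or_ne i j
    · field_simp [hp]
      ring
    · rw [hWst i j hne hij, hWst j i hne.symm hji]
      ring

end Matrix

theorem mul_exp_log_div {x y : ℝ} (hx : 0 < x) (hy : 0 < y) : y * exp (log (x / y)) = x := by
  rw [exp_log (div_pos hx hy), mul_div_cancel₀ x hy.ne']

theorem mul_exp_neg_log_div {x y : ℝ} (hx : 0 < x) (hy : 0 < y) :
    x * exp (-log (x / y)) = y := by
  rw [exp_neg, exp_log (div_pos hx hy), inv_div, mul_div_cancel₀ y hx.ne']

theorem HTR_eq_tilted_conjugate_general {m : ℕ}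
    (W Wst : Matrix (Fin (m + 3)) (Fin (m + 3)) ℝ)
    (h12pos : 0 < W 0 1) (h21pos : 0 < W 1 0)
    (h12 : Wst 0 1 = 0) (h21 : Wst 1 0 = 0)
    (hother : ∀ i j : Fin (m + 3),
      ¬((i = 0 ∧ j = 1) ∨ (i = 1 ∧ j = 0) ∨ (i = 0 ∧ j = 0) ∨ (i = 1 ∧ j = 1)) →
      Wst i j = W i j)
    (pst : Fin (m + 3) → ℝ) (hpst : ∀ i, 0 < pst i)
    (M : ℝ → Matrix (Fin (m + 3)) (Fin (m + 3)) ℝ)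
    (hM : ∀ q, M q = Matrix.of fun i j =>
      if i = 0 ∧ j = 1 then W 0 1 * Real.exp (-q)
      else if i = 1 ∧ j = 0 then W 1 0 * Real.exp q
      else W i j) :
    W - Wst + Matrix.diagonal pst * Wst.transpose *
        Matrix.diagonal (fun i => (pst i)⁻¹) =
      Matrix.diagonal pst *
        (M (Real.log (W 0 1 * pst 1 / (W 1 0 * pst 0)))).transpose *
        Matrix.diagonal (fun i => (pst i)⁻¹) := by
  have hW : 0 < W 0 1 * pst 1 := mul_pos h12pos (hpst 1)
  have hW' : 0 < W 1 0 * pst 0 := mul_pos h21pos (hpst 0)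
  refine htrGenerator_eq_timeReversal (a := 0) (b := 1) (fun i => (hpst i).ne')
    h12 h21 (fun i j hij hedge => hother i j ?_) (fun i j hedge => ?_) ?_ ?_
  · rw [Ne, Sym2.eq_iff] at hedge
    rintro (h | h | ⟨rfl, rfl⟩ | ⟨rfl, rfl⟩) <;> tauto
  · rw [Ne, Sym2.eq_iff] at hedge
    simp only [hM, of_apply]
    rw [if_neg (by tauto), if_neg (by tauto)]
  · simp only [hM, of_apply, one_ne_zero, zero_ne_one, and_self, ↓reduceIte]
    linear_combination mul_exp_log_div hW hW'
  · simp only [hM, of_apply, and_self, ↓reduceIte]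
    linear_combination mul_exp_neg_log_div hW hW'

/-- Theorem 4, Eq. S33: the HTR generator equals the
`Pst`-conjugated transpose of the tilted matrix evaluated at the effective
affinity: `W̃ = Pst M(F̃)ᵀ Pst⁻¹`, where `M(q)` replaces the entries `W₁₂, W₂₁`
by `W₁₂ e^{−q}, W₂₁ e^{q}` and `F̃ = log(W₁₂ pst₂/(W₂₁ pst₁))`.
States `1,2` are indices `0,1`. -/
theorem HTR_eq_tilted_conjugate {m : ℕ}
    (W Wst : Matrix (Fin (m + 3)) (Fin (m + 3)) ℝ)
    (hoff : ∀ i j : Fin (m + 3), i ≠ j → 0 ≤ W i j)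
    (hcol : ∀ j : Fin (m + 3), ∑ i : Fin (m + 3), W i j = 0)
    (h12pos : 0 < W 0 1) (h21pos : 0 < W 1 0)
    (h12 : Wst 0 1 = 0) (h21 : Wst 1 0 = 0)
    (h11 : Wst 0 0 = W 0 0 + W 1 0) (h22 : Wst 1 1 = W 1 1 + W 0 1)
    (hother : ∀ i j : Fin (m + 3),
      ¬((i = 0 ∧ j = 1) ∨ (i = 1 ∧ j = 0) ∨ (i = 0 ∧ j = 0) ∨ (i = 1 ∧ j = 1)) →
      Wst i j = W i j)
    (pst : Fin (m + 3) → ℝ) (hpst : ∀ i, 0 < pst i)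
    (hsteady : Wst.mulVec pst = 0)
    (M : ℝ → Matrix (Fin (m + 3)) (Fin (m + 3)) ℝ)
    (hM : ∀ q, M q = Matrix.of fun i j =>
      if i = 0 ∧ j = 1 then W 0 1 * Real.exp (-q)
      else if i = 1 ∧ j = 0 then W 1 0 * Real.exp q
      else W i j) :
    W - Wst + Matrix.diagonal pst * Wst.transpose *
        Matrix.diagonal (fun i => (pst i)⁻¹) =
      Matrix.diagonal pst *
        (M (Real.log (W 0 1 * pst 1 / (W 1 0 * pst 0)))).transpose *
        Matrix.diagonal (fun i => (pst i)⁻¹) :=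
  HTR_eq_tilted_conjugate_general W Wst h12pos h21pos h12 h21 hother pst hpst M hM
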